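/- Suppose the Hilbert space operators U on X and V on Y have closed range and there exist invertible operators K : ker U → ker V and K₊ : ker U* → ker V*, and assume there is an isometry L : ran U → ran V. Then U and V are equivalent after one-sided extension: with X₀ = ran V ⊖ ran L, there exist invertible operators E : ran V ⊕ ker V* → (ran U ⊕ ker U*) ⊕ X₀ and F : (ran U* ⊕ ker U) ⊕ X₀ → ran V* ⊕ ker V such that E⁻¹(U ⊕ I_{X₀}) = V F. -/

import Mathlib

/-!
Both operators are "zero on the kernel, an isomorphism onto the range":
`x ↦ (P_{ker U} x, U x)` identifies `X` with `ker U × ran U`, turning `U` into the second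
projection, and likewise for `V`. The isometry `L` splits `ran V = ran L ⊕ X₀ ≅ ran U × X₀`,
so `F := K × (L ⊕ ι)`, with `ι` the inclusion of `X₀`, maps `X × X₀` onto `Y` with
`V F (x, x₀) = L (U x) + x₀`. On the cokernel side `X = ran U ⊕ ker U*` and
`Y = (ran L ⊕ X₀) ⊕ ker V*`, so `E⁻¹ := (L ⊕ ι) × K₊` sends `(U x, x₀)` to the same vector.
-/

open ContinuousLinearMap

/-- 2×2 block operator matrix `[[A, B],[C, D]] : X ⊕ Y → X' ⊕ Y'`. -/
noncomputable def blk {X Y X' Y' : Type*} [NormedAddCommGroup X] [NormedSpace ℝ X]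
    [NormedAddCommGroup Y] [NormedSpace ℝ Y] [NormedAddCommGroup X'] [NormedSpace ℝ X']
    [NormedAddCommGroup Y'] [NormedSpace ℝ Y']
    (A : X →L[ℝ] X') (B : Y →L[ℝ] X') (C : X →L[ℝ] Y') (D : Y →L[ℝ] Y') :
    (X × Y) →L[ℝ] (X' × Y') :=
  (A.coprod B).prod (C.coprod D)

section blocks
variable {X Y X' Y' : Type*} [NormedAddCommGroup X] [NormedSpace ℝ X]
    [NormedAddCommGroup Y] [NormedSpace ℝ Y] [NormedAddCommGroup X'] [NormedSpace ℝ X']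
    [NormedAddCommGroup Y'] [NormedSpace ℝ Y']

/-- (1,1)-entry of a block operator. -/
noncomputable def b11 (T : (X × Y) →L[ℝ] (X' × Y')) : X →L[ℝ] X' :=
  (ContinuousLinearMap.fst ℝ X' Y').comp (T.comp (ContinuousLinearMap.inl ℝ X Y))

/-- (1,2)-entry of a block operator. -/
noncomputable def b12 (T : (X × Y) →L[ℝ] (X' × Y')) : Y →L[ℝ] X' :=
  (ContinuousLinearMap.fst ℝ X' Y').comp (T.comp (ContinuousLinearMap.inr ℝ X Y))

/-- (2,1)-entry of a block operator. -/
noncomputable def b21 (T : (X × Y) →L[ℝ] (X' × Y')) : X →L[ℝ] Y' :=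
  (ContinuousLinearMap.snd ℝ X' Y').comp (T.comp (ContinuousLinearMap.inl ℝ X Y))

/-- (2,2)-entry of a block operator. -/
noncomputable def b22 (T : (X × Y) →L[ℝ] (X' × Y')) : Y →L[ℝ] Y' :=
  (ContinuousLinearMap.snd ℝ X' Y').comp (T.comp (ContinuousLinearMap.inr ℝ X Y))

end blocks

section

variable {𝕜 E : Type*} [RCLike 𝕜] [NormedAddCommGroup E] [InnerProductSpace 𝕜 E]
  [CompleteSpace E]

noncomputable def Submodule.prodOrthogonalRangeEquiv {A : Type*} [NormedAddCommGroup A]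
    [NormedSpace 𝕜 A] [CompleteSpace A] (S : Submodule 𝕜 E) [CompleteSpace S]
    (L : A →L[𝕜] S) (hL : ∀ a, ‖L a‖ = ‖a‖) :
    (A × ↥(S ⊓ (S.subtypeL ∘L L).rangeᗮ)) ≃L[𝕜] S :=
  haveI : CompleteSpace ↥(S ⊓ (S.subtypeL ∘L L).rangeᗮ) :=
    ((completeSpace_coe_iff_isComplete.1 ‹_›).isClosed.inter
      (Submodule.isClosed_orthogonal _)).completeSpace_coe
  haveI : CompleteSpace (S.subtypeL ∘L L).range :=
    (AddMonoidHomClass.isometry_of_norm (S.subtypeL ∘L L) hL).isClosedEmbedding.isClosed_range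
      |>.completeSpace_coe
  .ofBijective (L.coprod ((Submodule.subtypeL _).codRestrict S fun x ↦ x.2.1))
    (by
      refine LinearMap.ker_eq_bot'.2 fun ⟨a, x₀⟩ h ↦ ?_
      have h' : (L a : E) = -x₀ := eq_neg_of_add_eq_zero_left (congrArg Subtype.val h)
      have hx₀ : (x₀ : E) = 0 := by
        refine (Submodule.orthogonal_disjoint (S.subtypeL ∘L L).range).le_bot ⟨?_, x₀.2.2⟩
        rw [← neg_neg (x₀ : E), ← h']
        exact Submodule.neg_mem _ ⟨a, rfl⟩
      have hLa : L a = 0 := Subtype.ext (h'.trans (by simp [hx₀]))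
      have ha : a = 0 := norm_eq_zero.1 (by rw [← hL, hLa, norm_zero])
      exact Prod.ext ha (Subtype.ext hx₀))
    (by
      refine LinearMap.range_eq_top.2 fun s ↦ ?_
      obtain ⟨a, ha⟩ := ((S.subtypeL ∘L L).range.orthogonalProjectionOnto (s : E)).2
      refine ⟨(a, ⟨s - L a, S.sub_mem s.2 (L a).2, ?_⟩), Subtype.ext ?_⟩
      · have ha' : (L a : E) = (S.subtypeL ∘L L).range.starProjection s := ha
        rw [ha']
        exact Submodule.sub_starProjection_mem_orthogonal _
      · exact add_sub_cancel _ _)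

variable {F : Type*} [NormedAddCommGroup F]

namespace ContinuousLinearMap

section kerProdRange

variable [NormedSpace 𝕜 F] [CompleteSpace F]

noncomputable def kerProdRangeEquiv (T : E →L[𝕜] F) (hT : IsClosed (Set.range T)) :
    E ≃L[𝕜] T.ker × T.range :=
  haveI : CompleteSpace T.range := hT.completeSpace_coe
  .ofBijective (T.ker.orthogonalProjectionOnto.prod T.rangeRestrict)
    (by
      refine LinearMap.ker_eq_bot'.2 fun x hx ↦ ?_
      have hPx : T.ker.orthogonalProjectionOnto x = 0 := congrArg Prod.fst hx
      have hTx : x ∈ T.ker := congrArg (Subtype.val ∘ Prod.snd) hx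
      simpa [hPx, eq_comm] using
        congrArg Subtype.val (T.ker.orthogonalProjectionOnto_mem_subspace_eq_self ⟨x, hTx⟩))
    (by
      refine LinearMap.range_eq_top.2 fun ⟨k, ⟨y, z, hz⟩⟩ ↦ ?_
      have hPz : T (T.ker.starProjection z) = 0 := (T.ker.orthogonalProjectionOnto z).2
      refine ⟨k + (z - T.ker.starProjection z), Prod.ext ?_ (Subtype.ext ?_)⟩
      · simp [Submodule.orthogonalProjectionOnto_apply_of_mem_orthogonal
          (T.ker.sub_starProjection_mem_orthogonal z)]
      · simp [hPz, ← hz])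

theorem kerProdRangeEquiv_apply (T : E →L[𝕜] F) (hT : IsClosed (Set.range T)) (x : E) :
    T.kerProdRangeEquiv hT x =
      (T.ker.orthogonalProjectionOnto x, ⟨T x, LinearMap.mem_range_self _ x⟩) :=
  rfl

theorem apply_kerProdRangeEquiv_symm (T : E →L[𝕜] F) (hT : IsClosed (Set.range T))
    (p : T.ker × T.range) : T ((T.kerProdRangeEquiv hT).symm p) = p.2 :=
  congrArg (Subtype.val ∘ Prod.snd) ((T.kerProdRangeEquiv hT).apply_symm_apply p)

end kerProdRange

section rangeProdKerAdjoint

variable [InnerProductSpace 𝕜 F] [CompleteSpace F]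

noncomputable def rangeProdKerAdjointEquiv (T : E →L[𝕜] F) (hT : IsClosed (Set.range T)) :
    (T.range × (adjoint T).ker) ≃L[𝕜] F :=
  haveI : CompleteSpace T.range := hT.completeSpace_coe
  Submodule.prodEquivOfIsTopCompl _ _ (T.orthogonal_range ▸ T.range.isTopCompl_orthogonal)

theorem rangeProdKerAdjointEquiv_apply (T : E →L[𝕜] F) (hT : IsClosed (Set.range T))
    (p : T.range × (adjoint T).ker) : T.rangeProdKerAdjointEquiv hT p = (p.1 : F) + p.2 :=
  rfl

theorem rangeProdKerAdjointEquiv_symm_apply_apply (T : E →L[𝕜] F) (hT : IsClosed (Set.range T))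
    (x : E) :
    (T.rangeProdKerAdjointEquiv hT).symm (T x) = (⟨T x, LinearMap.mem_range_self _ x⟩, 0) :=
  (ContinuousLinearEquiv.symm_apply_eq _).2 (by simp [rangeProdKerAdjointEquiv_apply])

end rangeProdKerAdjoint

end ContinuousLinearMap

end

/-- Closed range Hilbert space operators with isomorphic kernels and cokernels, together with an
isometry `L : ran U → ran V`, are equivalent after one-sided extension with extension space
`X₀ = ran V ⊖ ran L`. -/
theorem stmt19 {X Y : Type*}
    [NormedAddCommGroup X] [InnerProductSpace ℝ X] [CompleteSpace X]
    [NormedAddCommGroup Y] [InnerProductSpace ℝ Y] [CompleteSpace Y]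
    (U : X →L[ℝ] X) (V : Y →L[ℝ] Y)
    (hU : IsClosed (Set.range U)) (hV : IsClosed (Set.range V))
    (K : ↥(LinearMap.ker (U : X →ₗ[ℝ] X)) ≃L[ℝ] ↥(LinearMap.ker (V : Y →ₗ[ℝ] Y)))
    (Kp : ↥(LinearMap.ker (ContinuousLinearMap.adjoint U : X →ₗ[ℝ] X)) ≃L[ℝ]
      ↥(LinearMap.ker (ContinuousLinearMap.adjoint V : Y →ₗ[ℝ] Y)))
    (L : ↥(LinearMap.range (U : X →ₗ[ℝ] X)) →L[ℝ] ↥(LinearMap.range (V : Y →ₗ[ℝ] Y)))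
    (hL : ∀ x, ‖L x‖ = ‖x‖)
    (X₀ : Submodule ℝ Y)
    (hX₀ : X₀ = LinearMap.range (V : Y →ₗ[ℝ] Y) ⊓
      (LinearMap.range ((LinearMap.range (V : Y →ₗ[ℝ] Y)).subtypeL.comp L :
        ↥(LinearMap.range (U : X →ₗ[ℝ] X)) →ₗ[ℝ] Y))ᗮ) :
    ∃ (E : Y →L[ℝ] (X × ↥X₀)) (E' : (X × ↥X₀) →L[ℝ] Y)
      (F : (X × ↥X₀) →L[ℝ] Y) (F' : Y →L[ℝ] (X × ↥X₀)),
      E.comp E' = ContinuousLinearMap.id ℝ (X × ↥X₀) ∧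
      E'.comp E = ContinuousLinearMap.id ℝ Y ∧
      F.comp F' = ContinuousLinearMap.id ℝ Y ∧
      F'.comp F = ContinuousLinearMap.id ℝ (X × ↥X₀) ∧
      E'.comp (blk U 0 0 (ContinuousLinearMap.id ℝ ↥X₀)) = V.comp F := by
  subst hX₀
  have : CompleteSpace U.range := hU.completeSpace_coe
  have : CompleteSpace V.range := hV.completeSpace_coe
  let D := V.range.prodOrthogonalRangeEquiv L hL
  let eF : (X × _) ≃L[ℝ] Y :=
    ((U.kerProdRangeEquiv hU).prodCongr (.refl ℝ _)).trans <|
      (ContinuousLinearEquiv.prodAssoc ℝ _ _ _).trans <|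
        (K.prodCongr D).trans (V.kerProdRangeEquiv hV).symm
  let eE : (X × _) ≃L[ℝ] Y :=
    ((U.rangeProdKerAdjointEquiv hU).symm.prodCongr (.refl ℝ _)).trans <|
      (ContinuousLinearEquiv.prodAssoc ℝ _ _ _).trans <|
        ((ContinuousLinearEquiv.refl ℝ _).prodCongr (.prodComm ℝ _ _)).trans <|
          (ContinuousLinearEquiv.prodAssoc ℝ _ _ _).symm.trans <|
            (D.prodCongr Kp).trans (V.rangeProdKerAdjointEquiv hV)
  refine ⟨eE.symm, eE, eF, eF.symm, eE.coe_symm_comp_coe, eE.coe_comp_coe_symm,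
    eF.coe_comp_coe_symm, eF.coe_symm_comp_coe, ?_⟩
  refine ContinuousLinearMap.ext fun ⟨x, x₀⟩ ↦ ?_
  have hblk : blk U 0 0 (.id ℝ _) (x, x₀) = (U x, x₀) := by
    simp only [blk, coprod_apply, prod_apply, zero_apply, add_zero, zero_add, id_apply]
  have hF : V (eF (x, x₀)) = D (⟨U x, LinearMap.mem_range_self _ x⟩, x₀) :=
    V.apply_kerProdRangeEquiv_symm hV _
  have hE : eE (U x, x₀) = D (⟨U x, LinearMap.mem_range_self _ x⟩, x₀) := by
    simp only [eE, ContinuousLinearEquiv.trans_apply, ContinuousLinearEquiv.prodCongr_apply,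
      U.rangeProdKerAdjointEquiv_symm_apply_apply, ContinuousLinearEquiv.refl_apply,
      ContinuousLinearEquiv.prodAssoc_apply, ContinuousLinearEquiv.prodComm_apply,
      Prod.swap_prod_mk, ContinuousLinearEquiv.prodAssoc_symm_apply,
      V.rangeProdKerAdjointEquiv_apply, map_zero, Submodule.coe_zero, add_zero]
  simp only [comp_apply, ContinuousLinearEquiv.coe_coe, hblk, hE, hF]
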